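/- For all smooth DFT vectors A, B, C : ℝ^{2d} → ℝ^{2d} and every index L, ([𝖫_C, 𝖫_A]B − 𝖫_{[[C,A]]}B)^L = η_{IK} η_{JM} ( B^J ∂^K C^M ∂^I A^L − B^J ∂^K A^M ∂^I C^L + ½ C^M ∂^K A^J ∂^I B^L − ½ A^M ∂^K C^J ∂^I B^L ). In particular, if the strong constraint η^{IJ} ∂_I f ∂_J g = 0 holds for every pair f, g of component functions of A, B, C, then [𝖫_C, 𝖫_A]B = 𝖫_{[[C,A]]}B, i.e. the algebra of generalized Lie derivatives closes on the C-bracket. -/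

import Mathlib

open scoped BigOperators

noncomputable section

/-- Doubled index set: `I = 1,…,2d`, realized as `Fin d ⊕ Fin d`. -/
abbrev DIdx (d : ℕ) := Fin d ⊕ Fin d

/-- The doubled space `ℝ^{2d}`. -/
abbrev DSpace (d : ℕ) := DIdx d → ℝ

/-- The constant O(d,d)-invariant metric `η = ((0,1_d),(1_d,0))`; numerically `η⁻¹ = η`. -/
def eta {d : ℕ} : DIdx d → DIdx d → ℝ
  | Sum.inl i, Sum.inr j => if i = j then 1 else 0
  | Sum.inr i, Sum.inl j => if i = j then 1 else 0
  | _, _ => 0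

/-- Partial derivative `∂_I f (x)`. -/
def pd {d : ℕ} (f : DSpace d → ℝ) (I : DIdx d) (x : DSpace d) : ℝ :=
  fderiv ℝ f x (Pi.single I 1)

/-- Lowered components `A_I := η_{IJ} A^J`. -/
def low {d : ℕ} (A : DSpace d → DSpace d) (I : DIdx d) : DSpace d → ℝ :=
  fun x => ∑ J, eta I J * A x J

/-- Raised derivative `∂^I f := η^{IJ} ∂_J f`. -/
def pdU {d : ℕ} (f : DSpace d → ℝ) (I : DIdx d) (x : DSpace d) : ℝ :=
  ∑ J, eta I J * pd f J x

/-- The DFT generalized Lie derivative `(𝖫_A B)^J := A^I ∂_I B^J − B^I ∂_I A^J + B_I ∂^J A^I`. -/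
def gLie {d : ℕ} (A B : DSpace d → DSpace d) (J : DIdx d) (x : DSpace d) : ℝ :=
  ∑ I, (A x I * pd (fun y => B y J) I x - B x I * pd (fun y => A y J) I x
      + low B I x * pdU (fun y => A y I) J x)

/-- The flat untwisted C-bracket `[[A,B]]^J := A^K ∂_K B^J − ½ A^K ∂^J B_K − (A ↔ B)`. -/
def cbC {d : ℕ} (A B : DSpace d → DSpace d) (J : DIdx d) (x : DSpace d) : ℝ :=
  ∑ K, (A x K * pd (fun y => B y J) K x - (1/2) * A x K * pdU (low B K) J x
      - B x K * pd (fun y => A y J) K x + (1/2) * B x K * pdU (low A K) J x)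

/-! ## Toolkit -/

variable {d : ℕ} {x : DSpace d}

lemma eta_contract (I : DIdx d) (f : DIdx d → ℝ) : ∑ J, eta I J * f J = f I.swap := by
  cases I with
  | inl i => simp [Fintype.sum_sum_type, eta, ite_mul, Finset.sum_ite_eq, Sum.swap]
  | inr i => simp [Fintype.sum_sum_type, eta, ite_mul, Finset.sum_ite_eq, Sum.swap]

lemma comp_contDiff {A : DSpace d → DSpace d} (hA : ContDiff ℝ (⊤ : ℕ∞) A) (L : DIdx d) :
    ContDiff ℝ (⊤ : ℕ∞) (fun x => A x L) := contDiff_pi.1 hA L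

lemma pd_contDiff {f : DSpace d → ℝ} (hf : ContDiff ℝ (⊤ : ℕ∞) f) (I : DIdx d) :
    ContDiff ℝ (⊤ : ℕ∞) (fun x => pd f I x) := by
  have h1 : ContDiff ℝ (⊤ : ℕ∞) (fderiv ℝ f) := hf.fderiv_right (m := (⊤ : ℕ∞)) (by simp)
  exact h1.clm_apply contDiff_const

lemma pd_sum {κ : Type*} [Fintype κ] {f : κ → DSpace d → ℝ}
    (hf : ∀ i, DifferentiableAt ℝ (f i) x) (I : DIdx d) :
    pd (fun y => ∑ i, f i y) I x = ∑ i, pd (f i) I x := by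
  simp only [pd, fderiv_fun_sum (fun i _ => hf i)]; simp

-- Clairaut symmetry of second partials
lemma pd_pd_symm {f : DSpace d → ℝ} (hf : ContDiff ℝ (⊤ : ℕ∞) f) (I J : DIdx d) :
    pd (fun y => pd f I y) J x = pd (fun y => pd f J y) I x := by
  have hsymm : IsSymmSndFDerivAt ℝ f x :=
    (hf.of_le (WithTop.coe_le_coe.2 (le_top : (2:ℕ∞) ≤ ⊤))).contDiffAt.isSymmSndFDerivAt (n := 2) minSmoothness_of_isRCLikeNormedField.le
  have key : ∀ (v w : DSpace d),
      fderiv ℝ (fun y => fderiv ℝ f y v) x w = fderiv ℝ (fderiv ℝ f) x w v := by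
    intro v w
    have hdf : DifferentiableAt ℝ (fderiv ℝ f) x :=
      (hf.fderiv_right (m := (⊤ : ℕ∞)) (by simp)).differentiable (by simp) |>.differentiableAt
    have := fderiv_clm_apply hdf (differentiableAt_const v)
    rw [show (fun y => fderiv ℝ f y v) = fun y => (fderiv ℝ f y) ((fun _ => v) y) from rfl, this]
    simp
  simp only [pd, key]
  exact hsymm _ _

lemma pd_mul {f g : DSpace d → ℝ} (hf : DifferentiableAt ℝ f x) (hg : DifferentiableAt ℝ g x)
    (I : DIdx d) :
    pd (fun y => f y * g y) I x = pd f I x * g x + f x * pd g I x := by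
  simp only [pd, fderiv_fun_mul hf hg]; simp; ring

lemma pd_combo3 {f1 g1 f2 g2 f3 g3 : DSpace d → ℝ}
    (h1 : DifferentiableAt ℝ f1 x) (k1 : DifferentiableAt ℝ g1 x)
    (h2 : DifferentiableAt ℝ f2 x) (k2 : DifferentiableAt ℝ g2 x)
    (h3 : DifferentiableAt ℝ f3 x) (k3 : DifferentiableAt ℝ g3 x) (R : DIdx d) :
    pd (fun y => f1 y * g1 y - f2 y * g2 y + f3 y * g3 y) R x
      = pd f1 R x * g1 x + f1 x * pd g1 R x - pd f2 R x * g2 x - f2 x * pd g2 R x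
        + pd f3 R x * g3 x + f3 x * pd g3 R x := by
  have e1 := pd_mul h1 k1 (I := R)
  have e2 := pd_mul h2 k2 (I := R)
  have e3 := pd_mul h3 k3 (I := R)
  have hsub : pd (fun y => f1 y * g1 y - f2 y * g2 y) R x
      = pd (fun y => f1 y * g1 y) R x - pd (fun y => f2 y * g2 y) R x := by
    simp only [pd, fderiv_fun_sub (h1.fun_mul k1) (h2.fun_mul k2)]; simp
  have hadd : pd (fun y => (f1 y * g1 y - f2 y * g2 y) + f3 y * g3 y) R x
      = pd (fun y => f1 y * g1 y - f2 y * g2 y) R x + pd (fun y => f3 y * g3 y) R x := by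
    simp only [pd, fderiv_fun_add ((h1.fun_mul k1).fun_sub (h2.fun_mul k2)) (h3.fun_mul k3)]; simp
  rw [hadd, hsub, e1, e2, e3]; ring

lemma pd_combo4 {f1 g1 g2 f2 g3 g4 : DSpace d → ℝ}
    (h1 : DifferentiableAt ℝ f1 x) (k1 : DifferentiableAt ℝ g1 x)
    (k2 : DifferentiableAt ℝ g2 x)
    (h2 : DifferentiableAt ℝ f2 x) (k3 : DifferentiableAt ℝ g3 x)
    (k4 : DifferentiableAt ℝ g4 x) (R : DIdx d) :
    pd (fun y => f1 y * g1 y - 1/2 * f1 y * g2 y - f2 y * g3 y + 1/2 * f2 y * g4 y) R x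
      = pd f1 R x * g1 x + f1 x * pd g1 R x
        - 1/2 * (pd f1 R x * g2 x + f1 x * pd g2 R x)
        - pd f2 R x * g3 x - f2 x * pd g3 R x
        + 1/2 * (pd f2 R x * g4 x + f2 x * pd g4 R x) := by
  have e1 := pd_mul h1 k1 (I := R)
  have e2 := pd_mul ((differentiableAt_const (1/2:ℝ)).fun_mul h1) k2 (I := R)
  have e2' := pd_mul (differentiableAt_const (1/2:ℝ)) h1 (I := R)
  have e3 := pd_mul h2 k3 (I := R)
  have e4 := pd_mul ((differentiableAt_const (1/2:ℝ)).fun_mul h2) k4 (I := R)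
  have e4' := pd_mul (differentiableAt_const (1/2:ℝ)) h2 (I := R)
  have hc : pd (fun _ => (1/2:ℝ)) R x = 0 := by simp [pd]
  have hs1 : pd (fun y => f1 y * g1 y - 1/2 * f1 y * g2 y) R x
      = pd (fun y => f1 y * g1 y) R x - pd (fun y => 1/2 * f1 y * g2 y) R x := by
    simp only [pd, fderiv_fun_sub (h1.fun_mul k1) (((differentiableAt_const _).fun_mul h1).fun_mul k2)]; simp
  have hs2 : pd (fun y => f1 y * g1 y - 1/2 * f1 y * g2 y - f2 y * g3 y) R x
      = pd (fun y => f1 y * g1 y - 1/2 * f1 y * g2 y) R x - pd (fun y => f2 y * g3 y) R x := by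
    simp only [pd, fderiv_fun_sub (((h1.fun_mul k1).fun_sub (((differentiableAt_const _).fun_mul h1).fun_mul k2)))
      (h2.fun_mul k3)]; simp
  have hs3 : pd (fun y => f1 y * g1 y - 1/2 * f1 y * g2 y - f2 y * g3 y + 1/2 * f2 y * g4 y) R x
      = pd (fun y => f1 y * g1 y - 1/2 * f1 y * g2 y - f2 y * g3 y) R x
        + pd (fun y => 1/2 * f2 y * g4 y) R x := by
    simp only [pd, fderiv_fun_add ((((h1.fun_mul k1).fun_sub (((differentiableAt_const _).fun_mul h1).fun_mul k2)).fun_sub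
      (h2.fun_mul k3))) (((differentiableAt_const _).fun_mul h2).fun_mul k4)]; simp
  rw [hs3, hs2, hs1, e1, e2, e3, e4, e2', e4', hc]; ring

lemma sum_zero_of_symm {ι : Type*} [Fintype ι] (s : ι → ι) (hs : ∀ i, s (s i) = i)
    (g : ι → ι → ℝ)
    (h8 : ∀ R I, g R I + g I R + g (s R) I + g R (s I) + g (s R) (s I)
        + g I (s R) + g (s I) R + g (s I) (s R) = 0) :
    ∑ R, ∑ I, g R I = 0 := by
  have hre : ∀ F : ι → ℝ, ∑ i, F (s i) = ∑ i, F i := fun F =>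
    Fintype.sum_equiv ⟨s, s, hs, hs⟩ _ _ (fun i => rfl)
  have h2 : ∑ R, ∑ I, g I R = ∑ R, ∑ I, g R I := Finset.sum_comm
  have h3 : ∑ R, ∑ I, g (s R) I = ∑ R, ∑ I, g R I := hre (fun R => ∑ I, g R I)
  have h4 : ∑ R, ∑ I, g R (s I) = ∑ R, ∑ I, g R I :=
    Finset.sum_congr rfl fun R _ => hre (g R)
  have h5 : ∑ R, ∑ I, g (s R) (s I) = ∑ R, ∑ I, g R I :=
    (Finset.sum_congr rfl fun R _ => hre (g (s R))).trans h3
  have h6 : ∑ R, ∑ I, g I (s R) = ∑ R, ∑ I, g R I :=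
    ((hre (fun R => ∑ I, g I R)).trans h2)
  have h7 : ∑ R, ∑ I, g (s I) R = ∑ R, ∑ I, g R I :=
    (Finset.sum_congr rfl fun R _ => hre (fun I => g I R)).trans h2
  have h8'' : ∑ R, ∑ I, g (s I) (s R) = ∑ R, ∑ I, g R I :=
    (Finset.sum_congr rfl fun R _ => hre (fun I => g I (s R))).trans h6
  have htot : ∑ R, ∑ I, (g R I + g I R + g (s R) I + g R (s I) + g (s R) (s I)
      + g I (s R) + g (s I) R + g (s I) (s R)) = 0 := by
    simp only [h8, Finset.sum_const_zero]
  simp only [Finset.sum_add_distrib] at htot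
  rw [h2, h3, h4, h5, h6, h7, h8''] at htot
  linarith

lemma quad_flat (F : DIdx d → DIdx d → DIdx d → DIdx d → ℝ) :
    ∑ I, ∑ K, ∑ J, ∑ M, eta I K * eta J M * F I K J M = ∑ I, ∑ J, F I I.swap J J.swap := by
  refine Finset.sum_congr rfl fun I _ => ?_
  have h1 : ∀ K, ∑ J, ∑ M, eta I K * eta J M * F I K J M = eta I K * ∑ J, F I K J J.swap := by
    intro K
    rw [Finset.mul_sum]
    refine Finset.sum_congr rfl fun J _ => ?_
    rw [← eta_contract J (fun M => F I K J M), Finset.mul_sum]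
    exact Finset.sum_congr rfl fun M _ => by ring
  simp_rw [h1]
  exact eta_contract I (fun K => ∑ J, F I K J J.swap)

lemma pdU_eq (f : DSpace d → ℝ) (I : DIdx d) (x : DSpace d) :
    pdU f I x = pd f I.swap x := eta_contract I (fun J => pd f J x)

lemma strong_use (f g : DSpace d → ℝ) (x : DSpace d) :
    ∑ K, ∑ M, eta K M * pd f K x * pd g M x = ∑ K, pd f K x * pd g K.swap x := by
  refine Finset.sum_congr rfl fun K _ => ?_
  rw [← eta_contract K (fun M => pd f K x * pd g M x)]
  exact Finset.sum_congr rfl fun M _ => by ring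

lemma gLie_flat (A B : DSpace d → DSpace d) (J : DIdx d) (x : DSpace d) :
    gLie A B J x = ∑ I, (A x I * pd (fun y => B y J) I x - B x I * pd (fun y => A y J) I x
      + B x I.swap * pd (fun y => A y I) J.swap x) := by
  simp only [gLie, low, pdU, eta_contract]

lemma low_fun (A : DSpace d → DSpace d) (K : DIdx d) :
    low A K = fun y => A y K.swap := funext fun y => eta_contract K (fun J => A y J)

lemma cbC_flat (A B : DSpace d → DSpace d) (J : DIdx d) (x : DSpace d) :
    cbC A B J x = ∑ K, (A x K * pd (fun y => B y J) K x
      - 1/2 * A x K * pd (fun y => B y K.swap) J.swap x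
      - B x K * pd (fun y => A y J) K x
      + 1/2 * B x K * pd (fun y => A y K.swap) J.swap x) := by
  simp only [cbC, low_fun, pdU, eta_contract]

private lemma key {ι : Type*} [Fintype ι] (s : ι → ι) (hs : ∀ i, s (s i) = i)
    (a b c : ι → ℝ) (da db dc : ι → ι → ℝ) (dda ddb ddc : ι → ι → ι → ℝ) (L : ι) :
    (∑ R, ((((c R) * (∑ I, (((((da R I) * (db I L)) + ((a I) * (((ddb R I L) + (ddb I R L)) / 2))) - (((db R I) * (da I L)) + ((b I) * (((dda R I L) + (dda I R L)) / 2)))) + (((db R (s I)) * (da (s L) I)) + ((b (s I)) * (((dda R (s L) I) + (dda (s L) R I)) / 2)))))) - ((∑ I, ((((a I) * (db I R)) - ((b I) * (da I R))) + ((b (s I)) * (da (s R) I)))) * (dc R L))) + ((∑ I, ((((a I) * (db I (s R))) - ((b I) * (da I (s R)))) + ((b (s I)) * (da (s (s R)) I)))) * (dc (s L) R)))) - (∑ R, ((((a R) * (∑ I, (((((dc R I) * (db I L)) + ((c I) * (((ddb R I L) + (ddb I R L)) / 2))) - (((db R I) * (dc I L)) + ((b I) * (((ddc R I L) + (ddc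 I R L)) / 2)))) + (((db R (s I)) * (dc (s L) I)) + ((b (s I)) * (((ddc R (s L) I) + (ddc (s L) R I)) / 2)))))) - ((∑ I, ((((c I) * (db I R)) - ((b I) * (dc I R))) + ((b (s I)) * (dc (s R) I)))) * (da R L))) + ((∑ I, ((((c I) * (db I (s R))) - ((b I) * (dc I (s R)))) + ((b (s I)) * (dc (s (s R)) I)))) * (da (s L) R)))) - (∑ R, ((((∑ I, (((((c I) * (da I R)) - (((1/2) * (c I)) * (da (s R) (s I)))) - ((a I) * (dc I R))) + (((1/2) * (a I)) * (dc (s R) (s I))))) * (db R L)) - ((b R) * (∑ I, ((((((dc R I) * (da I L)) + ((c I) * (((dda R I L) + (dda I R L)) / 2))) - ((1/2) * (((dc R I) * (da (s L) (s I))) + ((c I) * (((dda R (s L) (s I)) + (dda (s L) R (s I))) / 2))))) - (((da R I) * (dc I L)) + ((a I) * (((ddc R I L) + (ddc I R L)) / 2)))) + ((1/2) * (((da R I) * (dc (s L) (s I))) + ((a I) * (((ddc R (s L) (s I)) + (ddc (s L) R (s I))) / 2)))))))) + ((b (s R)) * (∑ I, ((((((dc (s L) I) * (da I R)) + ((c I)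 * (((dda (s L) I R) + (dda I (s L) R)) / 2))) - ((1/2) * (((dc (s L) I) * (da (s R) (s I))) + ((c I) * (((dda (s L) (s R) (s I)) + (dda (s R) (s L) (s I))) / 2))))) - (((da (s L) I) * (dc I R)) + ((a I) * (((ddc (s L) I R) + (ddc I (s L) R)) / 2)))) + ((1/2) * (((da (s L) I) * (dc (s R) (s I))) + ((a I) * (((ddc (s L) (s R) (s I)) + (ddc (s R) (s L) (s I))) / 2))))))))) = (∑ I, ∑ J, ((((((b J) * (dc (s (s I)) (s J))) * (da (s I) L)) - (((b J) * (da (s (s I)) (s J))) * (dc (s I) L))) + ((((1/2) * (c (s J))) * (da (s (s I)) J)) * (db (s I) L))) - ((((1/2) * (a (s J))) * (dc (s (s I)) J)) * (db (s I) L)))) := by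
  have e1 : (∑ R, ((((c R) * (∑ I, (((((da R I) * (db I L)) + ((a I) * (((ddb R I L) + (ddb I R L)) / 2))) - (((db R I) * (da I L)) + ((b I) * (((dda R I L) + (dda I R L)) / 2)))) + (((db R (s I)) * (da (s L) I)) + ((b (s I)) * (((dda R (s L) I) + (dda (s L) R I)) / 2)))))) - ((∑ I, ((((a I) * (db I R)) - ((b I) * (da I R))) + ((b (s I)) * (da (s R) I)))) * (dc R L))) + ((∑ I, ((((a I) * (db I (s R))) - ((b I) * (da I (s R)))) + ((b (s I)) * (da (s (s R)) I)))) * (dc (s L) R)))) = ∑ R, ∑ I, (((((c R) * (((((da R I) * (db I L)) + ((a I) * (((ddb R I L) + (ddb I R L)) / 2))) - (((db R I) * (da I L)) + ((b I) * (((dda R I L) + (dda I R L)) / 2)))) + (((db R (s I)) * (da (s L) I)) + ((b (s I)) * (((dda R (s L) I) + (dda (s L) R I)) / 2))))) - (((((a I) * (db I R)) - ((b I) * (da I R))) + ((b (s I)) * (da (s R) I))) * (dc R L))) + (((((a I) * (db I (s R))) - ((b I) * (da I (s R)))) + ((b (s I)) * (da (s (s R)) I))) * (dc (s L) R)))) :=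 by
    refine Finset.sum_congr rfl fun R _ => ?_
    rw [Finset.mul_sum, Finset.sum_mul, Finset.sum_mul, ← Finset.sum_sub_distrib,
      ← Finset.sum_add_distrib]
  have e2 : (∑ R, ((((a R) * (∑ I, (((((dc R I) * (db I L)) + ((c I) * (((ddb R I L) + (ddb I R L)) / 2))) - (((db R I) * (dc I L)) + ((b I) * (((ddc R I L) + (ddc I R L)) / 2)))) + (((db R (s I)) * (dc (s L) I)) + ((b (s I)) * (((ddc R (s L) I) + (ddc (s L) R I)) / 2)))))) - ((∑ I, ((((c I) * (db I R)) - ((b I) * (dc I R))) + ((b (s I)) * (dc (s R) I)))) * (da R L))) + ((∑ I, ((((c I) * (db I (s R))) - ((b I) * (dc I (s R)))) + ((b (s I)) * (dc (s (s R)) I)))) * (da (s L) R)))) = ∑ R, ∑ I, (((((a R) * (((((dc R I) * (db I L)) + ((c I) * (((ddb R I L) + (ddb I R L)) / 2))) - (((db R I) * (dc I L)) + ((b I) * (((ddc R I L) + (ddc I R L)) / 2)))) + (((db R (s I)) * (dc (s L) I)) + ((b (s I)) * (((ddc R (s L) I) + (ddc (s L) R I)) / 2))))) - (((((c I) * (db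 I R)) - ((b I) * (dc I R))) + ((b (s I)) * (dc (s R) I))) * (da R L))) + (((((c I) * (db I (s R))) - ((b I) * (dc I (s R)))) + ((b (s I)) * (dc (s (s R)) I))) * (da (s L) R)))) := by
    refine Finset.sum_congr rfl fun R _ => ?_
    rw [Finset.mul_sum, Finset.sum_mul, Finset.sum_mul, ← Finset.sum_sub_distrib,
      ← Finset.sum_add_distrib]
  have e3 : (∑ R, ((((∑ I, (((((c I) * (da I R)) - (((1/2) * (c I)) * (da (s R) (s I)))) - ((a I) * (dc I R))) + (((1/2) * (a I)) * (dc (s R) (s I))))) * (db R L)) - ((b R) * (∑ I, ((((((dc R I) * (da I L)) + ((c I) * (((dda R I L) + (dda I R L)) / 2))) - ((1/2) * (((dc R I) * (da (s L) (s I))) + ((c I) * (((dda R (s L) (s I)) + (dda (s L) R (s I))) / 2))))) - (((da R I) * (dc I L)) + ((a I) * (((ddc R I L) + (ddc I R L)) / 2)))) + ((1/2) * (((da R I) * (dc (s L) (s I))) + ((a I) * (((ddc R (s L) (s I)) + (ddc (s L) R (s I))) / 2)))))))) + ((b (s R)) * (∑ I, ((((((dc (s L) I) * (da I R)) + ((c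 I) * (((dda (s L) I R) + (dda I (s L) R)) / 2))) - ((1/2) * (((dc (s L) I) * (da (s R) (s I))) + ((c I) * (((dda (s L) (s R) (s I)) + (dda (s R) (s L) (s I))) / 2))))) - (((da (s L) I) * (dc I R)) + ((a I) * (((ddc (s L) I R) + (ddc I (s L) R)) / 2)))) + ((1/2) * (((da (s L) I) * (dc (s R) (s I))) + ((a I) * (((ddc (s L) (s R) (s I)) + (ddc (s R) (s L) (s I))) / 2))))))))) = ∑ R, ∑ I, (((((((((c I) * (da I R)) - (((1/2) * (c I)) * (da (s R) (s I)))) - ((a I) * (dc I R))) + (((1/2) * (a I)) * (dc (s R) (s I)))) * (db R L)) - ((b R) * ((((((dc R I) * (da I L)) + ((c I) * (((dda R I L) + (dda I R L)) / 2))) - ((1/2) * (((dc R I) * (da (s L) (s I))) + ((c I) * (((dda R (s L) (s I)) + (dda (s L) R (s I))) / 2))))) - (((da R I) * (dc I L)) + ((a I) * (((ddc R I L) + (ddc I R L)) / 2)))) + ((1/2) * (((da R I) * (dc (s L) (s I))) + ((a I) * (((ddc R (s L) (s I)) + (ddc (s L) R (s I))) / 2))))))) + ((b (s R)) * ((((((dc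 (s L) I) * (da I R)) + ((c I) * (((dda (s L) I R) + (dda I (s L) R)) / 2))) - ((1/2) * (((dc (s L) I) * (da (s R) (s I))) + ((c I) * (((dda (s L) (s R) (s I)) + (dda (s R) (s L) (s I))) / 2))))) - (((da (s L) I) * (dc I R)) + ((a I) * (((ddc (s L) I R) + (ddc I (s L) R)) / 2)))) + ((1/2) * (((da (s L) I) * (dc (s R) (s I))) + ((a I) * (((ddc (s L) (s R) (s I)) + (ddc (s R) (s L) (s I))) / 2)))))))) := by
    refine Finset.sum_congr rfl fun R _ => ?_
    rw [Finset.sum_mul, Finset.mul_sum, Finset.mul_sum, ← Finset.sum_sub_distrib,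
      ← Finset.sum_add_distrib]
  have hz : (∑ R, ∑ I, ((((((((c R) * (((((da R I) * (db I L)) + ((a I) * (((ddb R I L) + (ddb I R L)) / 2))) - (((db R I) * (da I L)) + ((b I) * (((dda R I L) + (dda I R L)) / 2)))) + (((db R (s I)) * (da (s L) I)) + ((b (s I)) * (((dda R (s L) I) + (dda (s L) R I)) / 2))))) - (((((a I) * (db I R)) - ((b I) * (da I R))) + ((b (s I)) * (da (s R) I))) * (dc R L))) + (((((a I) * (db I (s R))) - ((b I) * (da I (s R)))) + ((b (s I)) * (da (s (s R)) I))) * (dc (s L) R))) - ((((a R) * (((((dc R I) * (db I L)) + ((c I) * (((ddb R I L) + (ddb I R L)) / 2))) - (((db R I) * (dc I L)) + ((b I) * (((ddc R I L) + (ddc I R L)) / 2)))) + (((db R (s I)) * (dc (s L) I)) + ((b (s I)) * (((ddc R (s L) I) + (ddc (s L) R I)) / 2))))) - (((((c I) * (db I R)) - ((b I) * (dc I R))) + ((b (s I)) * (dc (s R) I))) * (da R L))) + (((((c I) * (db I (s R))) - ((b I) * (dc I (s R)))) + ((b (s I)) * (dc (s (s R)) I))) * (da (s L) R)))) - ((((((((c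 I) * (da I R)) - (((1/2) * (c I)) * (da (s R) (s I)))) - ((a I) * (dc I R))) + (((1/2) * (a I)) * (dc (s R) (s I)))) * (db R L)) - ((b R) * ((((((dc R I) * (da I L)) + ((c I) * (((dda R I L) + (dda I R L)) / 2))) - ((1/2) * (((dc R I) * (da (s L) (s I))) + ((c I) * (((dda R (s L) (s I)) + (dda (s L) R (s I))) / 2))))) - (((da R I) * (dc I L)) + ((a I) * (((ddc R I L) + (ddc I R L)) / 2)))) + ((1/2) * (((da R I) * (dc (s L) (s I))) + ((a I) * (((ddc R (s L) (s I)) + (ddc (s L) R (s I))) / 2))))))) + ((b (s R)) * ((((((dc (s L) I) * (da I R)) + ((c I) * (((dda (s L) I R) + (dda I (s L) R)) / 2))) - ((1/2) * (((dc (s L) I) * (da (s R) (s I))) + ((c I) * (((dda (s L) (s R) (s I)) + (dda (s R) (s L) (s I))) / 2))))) - (((da (s L) I) * (dc I R)) + ((a I) * (((ddc (s L) I R) + (ddc I (s L) R)) / 2)))) + ((1/2) * (((da (s L) I) * (dc (s R) (s I))) + ((a I) * (((ddc (s L) (s R) (s I)) + (ddc (s R) (s L) (s I))) / 2)))))))) -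 ((((((b I) * (dc (s (s R)) (s I))) * (da (s R) L)) - (((b I) * (da (s (s R)) (s I))) * (dc (s R) L))) + ((((1/2) * (c (s I))) * (da (s (s R)) I)) * (db (s R) L))) - ((((1/2) * (a (s I))) * (dc (s (s R)) I)) * (db (s R) L)))))) = 0 :=
    sum_zero_of_symm s hs (fun R I => ((((((((c R) * (((((da R I) * (db I L)) + ((a I) * (((ddb R I L) + (ddb I R L)) / 2))) - (((db R I) * (da I L)) + ((b I) * (((dda R I L) + (dda I R L)) / 2)))) + (((db R (s I)) * (da (s L) I)) + ((b (s I)) * (((dda R (s L) I) + (dda (s L) R I)) / 2))))) - (((((a I) * (db I R)) - ((b I) * (da I R))) + ((b (s I)) * (da (s R) I))) * (dc R L))) + (((((a I) * (db I (s R))) - ((b I) * (da I (s R)))) + ((b (s I)) * (da (s (s R)) I))) * (dc (s L) R))) - ((((a R) * (((((dc R I) * (db I L)) + ((c I) * (((ddb R I L) + (ddb I R L)) / 2))) - (((db R I) * (dc I L)) + ((b I) * (((ddc R I L) + (ddc I R L)) / 2)))) + (((db R (s I)) * (dc (s L) I)) + ((b (s I)) * (((ddc R (s L) I) + (ddc (s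 L) R I)) / 2))))) - (((((c I) * (db I R)) - ((b I) * (dc I R))) + ((b (s I)) * (dc (s R) I))) * (da R L))) + (((((c I) * (db I (s R))) - ((b I) * (dc I (s R)))) + ((b (s I)) * (dc (s (s R)) I))) * (da (s L) R)))) - ((((((((c I) * (da I R)) - (((1/2) * (c I)) * (da (s R) (s I)))) - ((a I) * (dc I R))) + (((1/2) * (a I)) * (dc (s R) (s I)))) * (db R L)) - ((b R) * ((((((dc R I) * (da I L)) + ((c I) * (((dda R I L) + (dda I R L)) / 2))) - ((1/2) * (((dc R I) * (da (s L) (s I))) + ((c I) * (((dda R (s L) (s I)) + (dda (s L) R (s I))) / 2))))) - (((da R I) * (dc I L)) + ((a I) * (((ddc R I L) + (ddc I R L)) / 2)))) + ((1/2) * (((da R I) * (dc (s L) (s I))) + ((a I) * (((ddc R (s L) (s I)) + (ddc (s L) R (s I))) / 2))))))) + ((b (s R)) * ((((((dc (s L) I) * (da I R)) + ((c I) * (((dda (s L) I R) + (dda I (s L) R)) / 2))) - ((1/2) * (((dc (s L) I) * (da (s R) (s I))) + ((c I) * (((dda (s L) (s R) (s I)) + (dda (s R) (s L) (s I))) / 2)))))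 - (((da (s L) I) * (dc I R)) + ((a I) * (((ddc (s L) I R) + (ddc I (s L) R)) / 2)))) + ((1/2) * (((da (s L) I) * (dc (s R) (s I))) + ((a I) * (((ddc (s L) (s R) (s I)) + (ddc (s R) (s L) (s I))) / 2)))))))) - ((((((b I) * (dc (s (s R)) (s I))) * (da (s R) L)) - (((b I) * (da (s (s R)) (s I))) * (dc (s R) L))) + ((((1/2) * (c (s I))) * (da (s (s R)) I)) * (db (s R) L))) - ((((1/2) * (a (s I))) * (dc (s (s R)) I)) * (db (s R) L)))))) (fun R I => by simp only [hs]; ring)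
  have hsplit : (∑ R, ∑ I, ((((((((c R) * (((((da R I) * (db I L)) + ((a I) * (((ddb R I L) + (ddb I R L)) / 2))) - (((db R I) * (da I L)) + ((b I) * (((dda R I L) + (dda I R L)) / 2)))) + (((db R (s I)) * (da (s L) I)) + ((b (s I)) * (((dda R (s L) I) + (dda (s L) R I)) / 2))))) - (((((a I) * (db I R)) - ((b I) * (da I R))) + ((b (s I)) * (da (s R) I))) * (dc R L))) + (((((a I) * (db I (s R))) - ((b I) * (da I (s R)))) + ((b (s I)) * (da (s (s R)) I))) * (dc (s L) R))) - ((((a R) * (((((dc R I) * (db I L)) + ((c I) * (((ddb R I L) + (ddb I R L)) / 2))) - (((db R I) * (dc I L)) + ((b I) * (((ddc R I L) + (ddc I R L)) / 2)))) + (((db R (s I)) * (dc (s L) I)) + ((b (s I)) * (((ddc R (s L) I) + (ddc (s L) R I)) / 2))))) - (((((c I) * (db I R)) - ((b I) * (dc I R))) + ((b (s I)) * (dc (s R) I))) * (da R L))) + (((((c I) * (db I (s R))) - ((b I) * (dc I (s R)))) + ((b (s I)) * (dc (s (s R)) I))) * (da (s L) R)))) - ((((((((c I) * (da I R)) - (((1/2)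 * (c I)) * (da (s R) (s I)))) - ((a I) * (dc I R))) + (((1/2) * (a I)) * (dc (s R) (s I)))) * (db R L)) - ((b R) * ((((((dc R I) * (da I L)) + ((c I) * (((dda R I L) + (dda I R L)) / 2))) - ((1/2) * (((dc R I) * (da (s L) (s I))) + ((c I) * (((dda R (s L) (s I)) + (dda (s L) R (s I))) / 2))))) - (((da R I) * (dc I L)) + ((a I) * (((ddc R I L) + (ddc I R L)) / 2)))) + ((1/2) * (((da R I) * (dc (s L) (s I))) + ((a I) * (((ddc R (s L) (s I)) + (ddc (s L) R (s I))) / 2))))))) + ((b (s R)) * ((((((dc (s L) I) * (da I R)) + ((c I) * (((dda (s L) I R) + (dda I (s L) R)) / 2))) - ((1/2) * (((dc (s L) I) * (da (s R) (s I))) + ((c I) * (((dda (s L) (s R) (s I)) + (dda (s R) (s L) (s I))) / 2))))) - (((da (s L) I) * (dc I R)) + ((a I) * (((ddc (s L) I R) + (ddc I (s L) R)) / 2)))) + ((1/2) * (((da (s L) I) * (dc (s R) (s I))) + ((a I) * (((ddc (s L) (s R) (s I)) + (ddc (s R) (s L) (s I))) / 2)))))))) - ((((((b I) * (dc (s (s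 R)) (s I))) * (da (s R) L)) - (((b I) * (da (s (s R)) (s I))) * (dc (s R) L))) + ((((1/2) * (c (s I))) * (da (s (s R)) I)) * (db (s R) L))) - ((((1/2) * (a (s I))) * (dc (s (s R)) I)) * (db (s R) L))))))
      = (∑ R, ∑ I, (((((c R) * (((((da R I) * (db I L)) + ((a I) * (((ddb R I L) + (ddb I R L)) / 2))) - (((db R I) * (da I L)) + ((b I) * (((dda R I L) + (dda I R L)) / 2)))) + (((db R (s I)) * (da (s L) I)) + ((b (s I)) * (((dda R (s L) I) + (dda (s L) R I)) / 2))))) - (((((a I) * (db I R)) - ((b I) * (da I R))) + ((b (s I)) * (da (s R) I))) * (dc R L))) + (((((a I) * (db I (s R))) - ((b I) * (da I (s R)))) + ((b (s I)) * (da (s (s R)) I))) * (dc (s L) R))))) - (∑ R, ∑ I, (((((a R) * (((((dc R I) * (db I L)) + ((c I) * (((ddb R I L) + (ddb I R L)) / 2))) - (((db R I) * (dc I L)) + ((b I) * (((ddc R I L) + (ddc I R L)) / 2)))) + (((db R (s I)) * (dc (s L) I)) + ((b (s I)) * (((ddc R (s L) I) + (ddc (s L) R I)) / 2))))) - (((((c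 I) * (db I R)) - ((b I) * (dc I R))) + ((b (s I)) * (dc (s R) I))) * (da R L))) + (((((c I) * (db I (s R))) - ((b I) * (dc I (s R)))) + ((b (s I)) * (dc (s (s R)) I))) * (da (s L) R))))) - (∑ R, ∑ I, (((((((((c I) * (da I R)) - (((1/2) * (c I)) * (da (s R) (s I)))) - ((a I) * (dc I R))) + (((1/2) * (a I)) * (dc (s R) (s I)))) * (db R L)) - ((b R) * ((((((dc R I) * (da I L)) + ((c I) * (((dda R I L) + (dda I R L)) / 2))) - ((1/2) * (((dc R I) * (da (s L) (s I))) + ((c I) * (((dda R (s L) (s I)) + (dda (s L) R (s I))) / 2))))) - (((da R I) * (dc I L)) + ((a I) * (((ddc R I L) + (ddc I R L)) / 2)))) + ((1/2) * (((da R I) * (dc (s L) (s I))) + ((a I) * (((ddc R (s L) (s I)) + (ddc (s L) R (s I))) / 2))))))) + ((b (s R)) * ((((((dc (s L) I) * (da I R)) + ((c I) * (((dda (s L) I R) + (dda I (s L) R)) / 2))) - ((1/2) * (((dc (s L) I) * (da (s R) (s I))) + ((c I) * (((dda (s L) (s R) (s I)) + (dda (s R) (s L) (s I))) / 2))))) -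 (((da (s L) I) * (dc I R)) + ((a I) * (((ddc (s L) I R) + (ddc I (s L) R)) / 2)))) + ((1/2) * (((da (s L) I) * (dc (s R) (s I))) + ((a I) * (((ddc (s L) (s R) (s I)) + (ddc (s R) (s L) (s I))) / 2)))))))))
        - (∑ R, ∑ I, (((((((b I) * (dc (s (s R)) (s I))) * (da (s R) L)) - (((b I) * (da (s (s R)) (s I))) * (dc (s R) L))) + ((((1/2) * (c (s I))) * (da (s (s R)) I)) * (db (s R) L))) - ((((1/2) * (a (s I))) * (dc (s (s R)) I)) * (db (s R) L))))) := by
    simp only [Finset.sum_sub_distrib]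
  have hch4 : (∑ I, ∑ J, ((((((b J) * (dc (s (s I)) (s J))) * (da (s I) L)) - (((b J) * (da (s (s I)) (s J))) * (dc (s I) L))) + ((((1/2) * (c (s J))) * (da (s (s I)) J)) * (db (s I) L))) - ((((1/2) * (a (s J))) * (dc (s (s I)) J)) * (db (s I) L)))) = ∑ R, ∑ I, (((((((b I) * (dc (s (s R)) (s I))) * (da (s R) L)) - (((b I) * (da (s (s R)) (s I))) * (dc (s R) L))) + ((((1/2) * (c (s I))) * (da (s (s R)) I)) * (db (s R) L))) - ((((1/2) * (a (s I))) * (dc (s (s R)) I)) * (db (s R) L)))) := rfl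
  rw [e1, e2, e3, hch4, ← sub_eq_zero, ← hsplit]
  exact hz

lemma pd_gLie (A B : DSpace d → DSpace d) (hA : ContDiff ℝ (⊤ : ℕ∞) A) (hB : ContDiff ℝ (⊤ : ℕ∞) B)
    (M R : DIdx d) (x : DSpace d) :
    pd (fun y => gLie A B M y) R x = ∑ I, (((((pd (fun y => A y I) R x) * (pd (fun y => B y M) I x)) + ((A x I) * (((pd (fun y => pd (fun z => B z M) I y) R x) + (pd (fun y => pd (fun z => B z M) R y) I x)) / 2))) - (((pd (fun y => B y I) R x) * (pd (fun y => A y M) I x)) + ((B x I) * (((pd (fun y => pd (fun z => A z M) I y) R x) + (pd (fun y => pd (fun z => A z M) R y) I x)) / 2)))) + (((pd (fun y => B y (Sum.swap I)) R x) * (pd (fun y => A y I) (Sum.swap M) x)) + ((B x (Sum.swap I)) * (((pd (fun y => pd (fun z => A z I) (Sum.swap M) y) R x) + (pd (fun y => pd (fun z => A z I) R y) (Sum.swap M) x)) / 2)))) := by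
  have hrw : (fun y => gLie A B M y) = (fun y => ∑ I,
      (A y I * pd (fun z => B z M) I y - B y I * pd (fun z => A z M) I y
        + B y (Sum.swap I) * pd (fun z => A z I) (Sum.swap M) y)) :=
    funext fun y => gLie_flat A B M y
  have hd : ∀ I : DIdx d, DifferentiableAt ℝ (fun y =>
      A y I * pd (fun z => B z M) I y - B y I * pd (fun z => A z M) I y
        + B y (Sum.swap I) * pd (fun z => A z I) (Sum.swap M) y) x := by
    intro I
    have c1 : DifferentiableAt ℝ (fun y => A y I) x :=
      ((comp_contDiff hA I).differentiable (by simp)).differentiableAt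
    have c2 : DifferentiableAt ℝ (fun y => pd (fun z => B z M) I y) x :=
      ((pd_contDiff (comp_contDiff hB M) I).differentiable (by simp)).differentiableAt
    have c3 : DifferentiableAt ℝ (fun y => B y I) x :=
      ((comp_contDiff hB I).differentiable (by simp)).differentiableAt
    have c4 : DifferentiableAt ℝ (fun y => pd (fun z => A z M) I y) x :=
      ((pd_contDiff (comp_contDiff hA M) I).differentiable (by simp)).differentiableAt
    have c5 : DifferentiableAt ℝ (fun y => B y (Sum.swap I)) x :=
      ((comp_contDiff hB (Sum.swap I)).differentiable (by simp)).differentiableAt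
    have c6 : DifferentiableAt ℝ (fun y => pd (fun z => A z I) (Sum.swap M) y) x :=
      ((pd_contDiff (comp_contDiff hA I) (Sum.swap M)).differentiable (by simp)).differentiableAt
    exact ((c1.mul c2).sub (c3.mul c4)).add (c5.mul c6)
  rw [hrw]
  refine (pd_sum hd R).trans ?_
  refine Finset.sum_congr rfl fun I _ => ?_
  have c1 : DifferentiableAt ℝ (fun y => A y I) x :=
    ((comp_contDiff hA I).differentiable (by simp)).differentiableAt
  have c2 : DifferentiableAt ℝ (fun y => pd (fun z => B z M) I y) x :=
    ((pd_contDiff (comp_contDiff hB M) I).differentiable (by simp)).differentiableAt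
  have c3 : DifferentiableAt ℝ (fun y => B y I) x :=
    ((comp_contDiff hB I).differentiable (by simp)).differentiableAt
  have c4 : DifferentiableAt ℝ (fun y => pd (fun z => A z M) I y) x :=
    ((pd_contDiff (comp_contDiff hA M) I).differentiable (by simp)).differentiableAt
  have c5 : DifferentiableAt ℝ (fun y => B y (Sum.swap I)) x :=
    ((comp_contDiff hB (Sum.swap I)).differentiable (by simp)).differentiableAt
  have c6 : DifferentiableAt ℝ (fun y => pd (fun z => A z I) (Sum.swap M) y) x :=
    ((pd_contDiff (comp_contDiff hA I) (Sum.swap M)).differentiable (by simp)).differentiableAt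
  refine (pd_combo3 c1 c2 c3 c4 c5 c6 R).trans ?_
  linear_combination (A x I / 2) * pd_pd_symm (comp_contDiff hB M) I R
    - (B x I / 2) * pd_pd_symm (comp_contDiff hA M) I R
    + (B x (Sum.swap I) / 2) * pd_pd_symm (comp_contDiff hA I) (Sum.swap M) R

lemma pd_cbC (C A : DSpace d → DSpace d) (hC : ContDiff ℝ (⊤ : ℕ∞) C) (hA : ContDiff ℝ (⊤ : ℕ∞) A)
    (M R : DIdx d) (x : DSpace d) :
    pd (fun y => cbC C A M y) R x = ∑ I, ((((((pd (fun y => C y I) R x) * (pd (fun y => A y M) I x)) + ((C x I) * (((pd (fun y => pd (fun z => A z M) I y) R x) + (pd (fun y => pd (fun z => A z M) R y) I x)) / 2))) - ((1/2) * (((pd (fun y => C y I) R x) * (pd (fun y => A y (Sum.swap I)) (Sum.swap M) x)) + ((C x I) * (((pd (fun y => pd (fun z => A z (Sum.swap I)) (Sum.swap M) y) R x) + (pd (fun y => pd (fun z => A z (Sum.swap I)) R y) (Sum.swap M) x)) / 2))))) - (((pd (fun y => A y I) R x) * (pd (fun y => C y M) I x)) + ((A x I) * (((pd (fun y => pd (fun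 z => C z M) I y) R x) + (pd (fun y => pd (fun z => C z M) R y) I x)) / 2)))) + ((1/2) * (((pd (fun y => A y I) R x) * (pd (fun y => C y (Sum.swap I)) (Sum.swap M) x)) + ((A x I) * (((pd (fun y => pd (fun z => C z (Sum.swap I)) (Sum.swap M) y) R x) + (pd (fun y => pd (fun z => C z (Sum.swap I)) R y) (Sum.swap M) x)) / 2))))) := by
  have hrw : (fun y => cbC C A M y) = (fun y => ∑ I,
      (C y I * pd (fun z => A z M) I y - 1/2 * C y I * pd (fun z => A z (Sum.swap I)) (Sum.swap M) y
        - A y I * pd (fun z => C z M) I y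
        + 1/2 * A y I * pd (fun z => C z (Sum.swap I)) (Sum.swap M) y)) :=
    funext fun y => cbC_flat C A M y
  have hd : ∀ I : DIdx d, DifferentiableAt ℝ (fun y =>
      C y I * pd (fun z => A z M) I y - 1/2 * C y I * pd (fun z => A z (Sum.swap I)) (Sum.swap M) y
        - A y I * pd (fun z => C z M) I y
        + 1/2 * A y I * pd (fun z => C z (Sum.swap I)) (Sum.swap M) y) x := by
    intro I
    have c1 : DifferentiableAt ℝ (fun y => C y I) x :=
      ((comp_contDiff hC I).differentiable (by simp)).differentiableAt
    have c2 : DifferentiableAt ℝ (fun y => pd (fun z => A z M) I y) x :=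
      ((pd_contDiff (comp_contDiff hA M) I).differentiable (by simp)).differentiableAt
    have c3 : DifferentiableAt ℝ (fun y => pd (fun z => A z (Sum.swap I)) (Sum.swap M) y) x :=
      ((pd_contDiff (comp_contDiff hA (Sum.swap I)) (Sum.swap M)).differentiable (by simp)).differentiableAt
    have c4 : DifferentiableAt ℝ (fun y => A y I) x :=
      ((comp_contDiff hA I).differentiable (by simp)).differentiableAt
    have c5 : DifferentiableAt ℝ (fun y => pd (fun z => C z M) I y) x :=
      ((pd_contDiff (comp_contDiff hC M) I).differentiable (by simp)).differentiableAt
    have c6 : DifferentiableAt ℝ (fun y => pd (fun z => C z (Sum.swap I)) (Sum.swap M) y) x :=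
      ((pd_contDiff (comp_contDiff hC (Sum.swap I)) (Sum.swap M)).differentiable (by simp)).differentiableAt
    exact (((c1.mul c2).sub (((differentiableAt_const _).mul c1).mul c3)).sub
      (c4.mul c5)).add (((differentiableAt_const _).mul c4).mul c6)
  rw [hrw]
  refine (pd_sum hd R).trans ?_
  refine Finset.sum_congr rfl fun I _ => ?_
  have c1 : DifferentiableAt ℝ (fun y => C y I) x :=
    ((comp_contDiff hC I).differentiable (by simp)).differentiableAt
  have c2 : DifferentiableAt ℝ (fun y => pd (fun z => A z M) I y) x :=
    ((pd_contDiff (comp_contDiff hA M) I).differentiable (by simp)).differentiableAt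
  have c3 : DifferentiableAt ℝ (fun y => pd (fun z => A z (Sum.swap I)) (Sum.swap M) y) x :=
    ((pd_contDiff (comp_contDiff hA (Sum.swap I)) (Sum.swap M)).differentiable (by simp)).differentiableAt
  have c4 : DifferentiableAt ℝ (fun y => A y I) x :=
    ((comp_contDiff hA I).differentiable (by simp)).differentiableAt
  have c5 : DifferentiableAt ℝ (fun y => pd (fun z => C z M) I y) x :=
    ((pd_contDiff (comp_contDiff hC M) I).differentiable (by simp)).differentiableAt
  have c6 : DifferentiableAt ℝ (fun y => pd (fun z => C z (Sum.swap I)) (Sum.swap M) y) x :=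
    ((pd_contDiff (comp_contDiff hC (Sum.swap I)) (Sum.swap M)).differentiable (by simp)).differentiableAt
  refine (pd_combo4 c1 c2 c3 c4 c5 c6 R).trans ?_
  linear_combination (C x I / 2) * pd_pd_symm (comp_contDiff hA M) I R
    - (C x I / 4) * pd_pd_symm (comp_contDiff hA (Sum.swap I)) (Sum.swap M) R
    - (A x I / 2) * pd_pd_symm (comp_contDiff hC M) I R
    + (A x I / 4) * pd_pd_symm (comp_contDiff hC (Sum.swap I)) (Sum.swap M) R

/-- The failure of closure of generalized Lie derivatives on the C-bracket
is the strong-constraint term; in particular it vanishes if the strong constraint holds for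
all component functions of `A`, `B`, `C`. -/
theorem statement2 {d : ℕ} (A B C : DSpace d → DSpace d)
    (hA : ContDiff ℝ (⊤ : ℕ∞) A) (hB : ContDiff ℝ (⊤ : ℕ∞) B) (hC : ContDiff ℝ (⊤ : ℕ∞) C) :
    (∀ (L : DIdx d) (x : DSpace d),
      gLie C (fun y M => gLie A B M y) L x - gLie A (fun y M => gLie C B M y) L x
        - gLie (fun y M => cbC C A M y) B L x
      = ∑ I, ∑ K, ∑ J, ∑ M, eta I K * eta J M *
          (B x J * pdU (fun y => C y M) K x * pdU (fun y => A y L) I x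
           - B x J * pdU (fun y => A y M) K x * pdU (fun y => C y L) I x
           + (1/2) * C x M * pdU (fun y => A y J) K x * pdU (fun y => B y L) I x
           - (1/2) * A x M * pdU (fun y => C y J) K x * pdU (fun y => B y L) I x))
    ∧ ((∀ V W : DSpace d → DSpace d,
          (V = A ∨ V = B ∨ V = C) → (W = A ∨ W = B ∨ W = C) →
          ∀ (I J : DIdx d) (x : DSpace d),
            ∑ K, ∑ M, eta K M * pd (fun y => V y I) K x * pd (fun y => W y J) M x = 0) →
        ∀ (L : DIdx d) (x : DSpace d),
          gLie C (fun y M => gLie A B M y) L x - gLie A (fun y M => gLie C B M y) L x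
            = gLie (fun y M => cbC C A M y) B L x) := by
  have hmain : ∀ (L : DIdx d) (x : DSpace d),
      gLie C (fun y M => gLie A B M y) L x - gLie A (fun y M => gLie C B M y) L x
        - gLie (fun y M => cbC C A M y) B L x
      = ∑ I, ∑ K, ∑ J, ∑ M, eta I K * eta J M *
          (B x J * pdU (fun y => C y M) K x * pdU (fun y => A y L) I x
           - B x J * pdU (fun y => A y M) K x * pdU (fun y => C y L) I x
           + (1/2) * C x M * pdU (fun y => A y J) K x * pdU (fun y => B y L) I x
           - (1/2) * A x M * pdU (fun y => C y J) K x * pdU (fun y => B y L) I x) := by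
    intro L x
    have hCG : gLie C (fun y M => gLie A B M y) L x = ∑ R, ((((C x R) * (∑ I, (((((pd (fun y => A y I) R x) * (pd (fun y => B y L) I x)) + ((A x I) * (((pd (fun y => pd (fun z => B z L) I y) R x) + (pd (fun y => pd (fun z => B z L) R y) I x)) / 2))) - (((pd (fun y => B y I) R x) * (pd (fun y => A y L) I x)) + ((B x I) * (((pd (fun y => pd (fun z => A z L) I y) R x) + (pd (fun y => pd (fun z => A z L) R y) I x)) / 2)))) + (((pd (fun y => B y (Sum.swap I)) R x) * (pd (fun y => A y I) (Sum.swap L) x)) + ((B x (Sum.swap I)) * (((pd (fun y => pd (fun z => A z I) (Sum.swap L) y) R x) + (pd (fun y => pd (fun z => A z I) R y) (Sum.swap L) x)) / 2)))))) - ((∑ I, ((((A x I) * (pd (fun y => B y R) I x)) - ((B x I) * (pd (fun y => A y R) I x))) + ((B x (Sum.swap I)) * (pd (fun y => A y I) (Sum.swap R) x)))) * (pd (fun y => C y L) R x))) + ((∑ I, ((((A x I) * (pd (fun y => B y (Sum.swap R)) I x)) - ((B x I) * (pd (fun y => A y (Sum.swap R)) I x))) + ((B x (Sum.swap I)) * (pd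 (fun y => A y I) (Sum.swap (Sum.swap R)) x)))) * (pd (fun y => C y R) (Sum.swap L) x))) := by
      rw [gLie_flat C (fun y M => gLie A B M y) L x]
      simp only [pd_gLie A B hA hB]
      simp only [gLie_flat A B]
    have hAG : gLie A (fun y M => gLie C B M y) L x = ∑ R, ((((A x R) * (∑ I, (((((pd (fun y => C y I) R x) * (pd (fun y => B y L) I x)) + ((C x I) * (((pd (fun y => pd (fun z => B z L) I y) R x) + (pd (fun y => pd (fun z => B z L) R y) I x)) / 2))) - (((pd (fun y => B y I) R x) * (pd (fun y => C y L) I x)) + ((B x I) * (((pd (fun y => pd (fun z => C z L) I y) R x) + (pd (fun y => pd (fun z => C z L) R y) I x)) / 2)))) + (((pd (fun y => B y (Sum.swap I)) R x) * (pd (fun y => C y I) (Sum.swap L) x)) + ((B x (Sum.swap I)) * (((pd (fun y => pd (fun z => C z I) (Sum.swap L) y) R x) + (pd (fun y => pd (fun z => C z I) R y) (Sum.swap L) x)) / 2)))))) - ((∑ I, ((((C x I) * (pd (fun y => B y R) I x)) - ((B x I) * (pd (fun y => C y R) I x))) + ((B x (Sum.swap I)) * (pd (fun y => C y I) (Sum.swap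 R) x)))) * (pd (fun y => A y L) R x))) + ((∑ I, ((((C x I) * (pd (fun y => B y (Sum.swap R)) I x)) - ((B x I) * (pd (fun y => C y (Sum.swap R)) I x))) + ((B x (Sum.swap I)) * (pd (fun y => C y I) (Sum.swap (Sum.swap R)) x)))) * (pd (fun y => A y R) (Sum.swap L) x))) := by
      rw [gLie_flat A (fun y M => gLie C B M y) L x]
      simp only [pd_gLie C B hC hB]
      simp only [gLie_flat C B]
    have hKB : gLie (fun y M => cbC C A M y) B L x = ∑ R, ((((∑ I, (((((C x I) * (pd (fun y => A y R) I x)) - (((1/2) * (C x I)) * (pd (fun y => A y (Sum.swap I)) (Sum.swap R) x))) - ((A x I) * (pd (fun y => C y R) I x))) + (((1/2) * (A x I)) * (pd (fun y => C y (Sum.swap I)) (Sum.swap R) x)))) * (pd (fun y => B y L) R x)) - ((B x R) * (∑ I, ((((((pd (fun y => C y I) R x) * (pd (fun y => A y L) I x)) + ((C x I) * (((pd (fun y => pd (fun z => A z L) I y) R x) + (pd (fun y => pd (fun z => A z L) R y) I x)) / 2))) - ((1/2) * (((pd (fun y => C y I) R x) * (pd (fun y => A y (Sum.swap I)) (Sum.swap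 L) x)) + ((C x I) * (((pd (fun y => pd (fun z => A z (Sum.swap I)) (Sum.swap L) y) R x) + (pd (fun y => pd (fun z => A z (Sum.swap I)) R y) (Sum.swap L) x)) / 2))))) - (((pd (fun y => A y I) R x) * (pd (fun y => C y L) I x)) + ((A x I) * (((pd (fun y => pd (fun z => C z L) I y) R x) + (pd (fun y => pd (fun z => C z L) R y) I x)) / 2)))) + ((1/2) * (((pd (fun y => A y I) R x) * (pd (fun y => C y (Sum.swap I)) (Sum.swap L) x)) + ((A x I) * (((pd (fun y => pd (fun z => C z (Sum.swap I)) (Sum.swap L) y) R x) + (pd (fun y => pd (fun z => C z (Sum.swap I)) R y) (Sum.swap L) x)) / 2)))))))) + ((B x (Sum.swap R)) * (∑ I, ((((((pd (fun y => C y I) (Sum.swap L) x) * (pd (fun y => A y R) I x)) + ((C x I) * (((pd (fun y => pd (fun z => A z R) I y) (Sum.swap L) x) + (pd (fun y => pd (fun z => A z R) (Sum.swap L) y) I x)) / 2))) - ((1/2) * (((pd (fun y => C y I) (Sum.swap L) x) * (pd (fun y => A y (Sum.swap I)) (Sum.swap R) x)) + ((C x I) * (((pd (fun y => pd (fun z =>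 A z (Sum.swap I)) (Sum.swap R) y) (Sum.swap L) x) + (pd (fun y => pd (fun z => A z (Sum.swap I)) (Sum.swap L) y) (Sum.swap R) x)) / 2))))) - (((pd (fun y => A y I) (Sum.swap L) x) * (pd (fun y => C y R) I x)) + ((A x I) * (((pd (fun y => pd (fun z => C z R) I y) (Sum.swap L) x) + (pd (fun y => pd (fun z => C z R) (Sum.swap L) y) I x)) / 2)))) + ((1/2) * (((pd (fun y => A y I) (Sum.swap L) x) * (pd (fun y => C y (Sum.swap I)) (Sum.swap R) x)) + ((A x I) * (((pd (fun y => pd (fun z => C z (Sum.swap I)) (Sum.swap R) y) (Sum.swap L) x) + (pd (fun y => pd (fun z => C z (Sum.swap I)) (Sum.swap L) y) (Sum.swap R) x)) / 2)))))))) := by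
      rw [gLie_flat (fun y M => cbC C A M y) B L x]
      simp only [pd_cbC C A hC hA]
      simp only [cbC_flat C A]
    have hQ : (∑ I, ∑ K, ∑ J, ∑ M, eta I K * eta J M * (B x J * pdU (fun y => C y M) K x * pdU (fun y => A y L) I x - B x J * pdU (fun y => A y M) K x * pdU (fun y => C y L) I x + (1/2) * C x M * pdU (fun y => A y J) K x * pdU (fun y => B y L) I x - (1/2) * A x M * pdU (fun y => C y J) K x * pdU (fun y => B y L) I x)) = ∑ I, ∑ J, ((((((B x J) * (pd (fun y => C y (Sum.swap J)) (Sum.swap (Sum.swap I)) x)) * (pd (fun y => A y L) (Sum.swap I) x)) - (((B x J) * (pd (fun y => A y (Sum.swap J)) (Sum.swap (Sum.swap I)) x)) * (pd (fun y => C y L) (Sum.swap I) x))) + ((((1/2) * (C x (Sum.swap J))) * (pd (fun y => A y J) (Sum.swap (Sum.swap I)) x)) * (pd (fun y => B y L) (Sum.swap I) x))) - ((((1/2) * (A x (Sum.swap J))) * (pd (fun y => C y J) (Sum.swap (Sum.swap I)) x)) * (pd (fun y => B y L) (Sum.swap I) x))) := by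
      rw [quad_flat (fun I K J M => (B x J * pdU (fun y => C y M) K x * pdU (fun y => A y L) I x - B x J * pdU (fun y => A y M) K x * pdU (fun y => C y L) I x + (1/2) * C x M * pdU (fun y => A y J) K x * pdU (fun y => B y L) I x - (1/2) * A x M * pdU (fun y => C y J) K x * pdU (fun y => B y L) I x))]
      simp only [pdU_eq]
    rw [hCG, hAG, hKB, hQ]
    exact key Sum.swap (fun i => Sum.swap_swap i)
      (fun I => A x I) (fun I => B x I) (fun I => C x I)
      (fun R I => pd (fun y => A y I) R x) (fun R I => pd (fun y => B y I) R x)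
      (fun R I => pd (fun y => C y I) R x)
      (fun R T I => pd (fun y => pd (fun z => A z I) T y) R x)
      (fun R T I => pd (fun y => pd (fun z => B z I) T y) R x)
      (fun R T I => pd (fun y => pd (fun z => C z I) T y) R x) L
  refine ⟨hmain, ?_⟩
  intro hsc L x
  have h0 := hmain L x
  have hquad : (∑ I, ∑ K, ∑ J, ∑ M, eta I K * eta J M * (B x J * pdU (fun y => C y M) K x * pdU (fun y => A y L) I x - B x J * pdU (fun y => A y M) K x * pdU (fun y => C y L) I x + (1/2) * C x M * pdU (fun y => A y J) K x * pdU (fun y => B y L) I x - (1/2) * A x M * pdU (fun y => C y J) K x * pdU (fun y => B y L) I x)) = 0 := by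
    rw [quad_flat (fun I K J M => (B x J * pdU (fun y => C y M) K x * pdU (fun y => A y L) I x - B x J * pdU (fun y => A y M) K x * pdU (fun y => C y L) I x + (1/2) * C x M * pdU (fun y => A y J) K x * pdU (fun y => B y L) I x - (1/2) * A x M * pdU (fun y => C y J) K x * pdU (fun y => B y L) I x))]
    simp only [pdU_eq, Sum.swap_swap]
    rw [Finset.sum_comm]
    refine Finset.sum_eq_zero fun J _ => ?_
    have hre : (∑ I, (((((((B x J) * (pd (fun y => C y (Sum.swap J)) I x)) * (pd (fun y => A y L) (Sum.swap I) x)) - (((B x J) * (pd (fun y => A y (Sum.swap J)) I x)) * (pd (fun y => C y L) (Sum.swap I) x))) + ((((1/2) * (C x (Sum.swap J))) * (pd (fun y => A y J) I x)) * (pd (fun y => B y L) (Sum.swap I) x))) - ((((1/2) * (A x (Sum.swap J))) * (pd (fun y => C y J) I x)) * (pd (fun y => B y L) (Sum.swap I) x))))) = B x J * (∑ I, pd (fun y => C y (Sum.swap J)) I x * pd (fun y => A y L) (Sum.swap I) x) - B x J * (∑ I, pd (fun y => A y (Sum.swap J)) I x * pd (fun y => C y L) (Sum.swap I) x) + (1/2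 * C x (Sum.swap J)) * (∑ I, pd (fun y => A y J) I x * pd (fun y => B y L) (Sum.swap I) x) - (1/2 * A x (Sum.swap J)) * (∑ I, pd (fun y => C y J) I x * pd (fun y => B y L) (Sum.swap I) x) := by
      rw [Finset.mul_sum, Finset.mul_sum, Finset.mul_sum, Finset.mul_sum,
        ← Finset.sum_sub_distrib, ← Finset.sum_add_distrib, ← Finset.sum_sub_distrib]
      all_goals exact Finset.sum_congr rfl fun I _ => by ring
    have z1 : ∑ K, pd (fun y => C y (Sum.swap J)) K x * pd (fun y => A y L) (Sum.swap K) x = 0 := by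
      rw [← strong_use]
      exact hsc C A (Or.inr (Or.inr rfl)) (Or.inl rfl) (Sum.swap J) L x
    have z2 : ∑ K, pd (fun y => A y (Sum.swap J)) K x * pd (fun y => C y L) (Sum.swap K) x = 0 := by
      rw [← strong_use]
      exact hsc A C (Or.inl rfl) (Or.inr (Or.inr rfl)) (Sum.swap J) L x
    have z3 : ∑ K, pd (fun y => A y J) K x * pd (fun y => B y L) (Sum.swap K) x = 0 := by
      rw [← strong_use]
      exact hsc A B (Or.inl rfl) (Or.inr (Or.inl rfl)) J L x
    have z4 : ∑ K, pd (fun y => C y J) K x * pd (fun y => B y L) (Sum.swap K) x = 0 := by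
      rw [← strong_use]
      exact hsc C B (Or.inr (Or.inr rfl)) (Or.inr (Or.inl rfl)) J L x
    rw [hre, z1, z2, z3, z4]
    ring
  linarith [h0, hquad]

end
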